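/- arXiv:2409.09038 — 3 statements merged into one kernel-verified Lean document; each statement's English description precedes it below -/
import Mathlib

section
/- Let 1 ≤ p < ∞ and let T = (A₁,…,A_m) be a tuple of d×d bicomplex matrices with component tuples T₁ = (A₁',…,A_m') and T₂ = (A₁'',…,A_m''), each commuting. Then the geometric spectral radius of T satisfies r_p(T) ≤ ‖T‖_p; that is, for every λ in the restricted spectrum σ_{r,p}(A₁,…,A_m) one has ‖λ‖_p ≤ ‖T‖_p, where ‖T‖_p = √((‖T₁‖_p + ‖T₂‖_p)/2) with ‖T₁‖_p = sup_{‖x₁‖=1} (∑_{j=1}^m ‖A_j' x₁‖^p)^{1/p} and ‖T₂‖_p = sup_{‖x₂‖=1} (∑_{j=1}^m ‖A_j'' x₂‖^p)^{1/p} (suprema over Euclidean unit vectors in ℂ^d). -/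
/-!
Normalising a common eigenvector of `T₁` for `μ` to a unit vector `x` gives
`(∑ j ‖A' j x‖ ^ p) ^ (1 / p) = (∑ j ‖μ j‖ ^ p) ^ (1 / p)`, so `‖μ‖_p ≤ ‖T₁‖_p`; likewise
`‖γ‖_p ≤ ‖T₂‖_p`, and the square root is monotone. The suprema are finite because they are
taken over the compact unit sphere.
-/

open Matrix

/-- A tuple `(μ 1, …, μ m)` is a joint eigenvalue of a tuple of `d × d` complex matrices
`(B 1, …, B m)` if there is a nonzero common eigenvector `x ∈ ℂ^d`. -/
def IsJointEigC {d m : ℕ} (B : Fin m → Matrix (Fin d) (Fin d) ℂ) (μ : Fin m → ℂ) : Prop :=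
  ∃ x : Fin d → ℂ, x ≠ 0 ∧ ∀ k, B k *ᵥ x = μ k • x

/-- The joint `p`-operator norm `‖B‖_p = sup_{‖x‖=1} (∑ j ‖B j x‖^p)^(1/p)` of a tuple of
`d × d` complex matrices, the supremum over Euclidean unit vectors of `ℂ^d`. -/
noncomputable def opNormP {d m : ℕ} (p : ℝ) (B : Fin m → Matrix (Fin d) (Fin d) ℂ) : ℝ :=
  sSup {r : ℝ | ∃ x : EuclideanSpace ℂ (Fin d), ‖x‖ = 1 ∧
    r = (∑ j, ‖(EuclideanSpace.equiv (Fin d) ℂ).symm (B j *ᵥ x)‖ ^ p) ^ (1 / p)}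

lemma bddAbove_opNormP_set {d m : ℕ} {p : ℝ} (hp : 0 ≤ p) (B : Fin m → Matrix (Fin d) (Fin d) ℂ) :
    BddAbove {r : ℝ | ∃ x : EuclideanSpace ℂ (Fin d), ‖x‖ = 1 ∧
      r = (∑ j, ‖(EuclideanSpace.equiv (Fin d) ℂ).symm (B j *ᵥ x)‖ ^ p) ^ (1 / p)} := by
  have hcont : Continuous fun x : EuclideanSpace ℂ (Fin d) =>
      (∑ j, ‖(EuclideanSpace.equiv (Fin d) ℂ).symm (B j *ᵥ x)‖ ^ p) ^ (1 / p) := by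
    have hmul : ∀ j, Continuous fun x : EuclideanSpace ℂ (Fin d) =>
        (EuclideanSpace.equiv (Fin d) ℂ).symm (B j *ᵥ x) := fun j => by fun_prop
    exact (continuous_finsetSum _ fun j _ =>
      ((hmul j).norm.rpow_const fun _ => Or.inr hp)).rpow_const fun _ => Or.inr (by positivity)
  refine ((isCompact_sphere (0 : EuclideanSpace ℂ (Fin d)) 1).image hcont).bddAbove.mono ?_
  rintro r ⟨x, hx, rfl⟩
  exact ⟨x, mem_sphere_zero_iff_norm.mpr hx, rfl⟩

lemma IsJointEigC.exists_norm_eq_one {d m : ℕ} {B : Fin m → Matrix (Fin d) (Fin d) ℂ}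
    {μ : Fin m → ℂ} (h : IsJointEigC B μ) :
    ∃ y : EuclideanSpace ℂ (Fin d), ‖y‖ = 1 ∧
      ∀ k, (EuclideanSpace.equiv (Fin d) ℂ).symm (B k *ᵥ y) = μ k • y := by
  obtain ⟨x, hx0, hx⟩ := h
  set X := (EuclideanSpace.equiv (Fin d) ℂ).symm x
  have hX : ‖X‖ ≠ 0 := by simpa [X] using hx0
  refine ⟨(‖X‖⁻¹ : ℂ) • X, ?_, fun k => ?_⟩
  · rw [norm_smul, norm_inv, Complex.norm_real, norm_norm, inv_mul_cancel₀ hX]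
  · ext i
    simp only [X, PiLp.continuousLinearEquiv_symm_apply, WithLp.ofLp_smul, mulVec_smul, hx k,
      map_smul, PiLp.smul_apply, smul_eq_mul]
    ring

lemma IsJointEigC.lpNorm_le_opNormP {d m : ℕ} {p : ℝ} (hp : 0 ≤ p)
    {B : Fin m → Matrix (Fin d) (Fin d) ℂ} {μ : Fin m → ℂ} (h : IsJointEigC B μ) :
    (∑ k, ‖μ k‖ ^ p) ^ (1 / p) ≤ opNormP p B := by
  obtain ⟨y, hy, hBy⟩ := h.exists_norm_eq_one
  refine le_csSup (bddAbove_opNormP_set hp B) ⟨y, hy, ?_⟩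
  simp only [hBy, norm_smul, hy, mul_one]

theorem bicomplex_spectral_radius_le_opNorm_general {d m : ℕ} (p : ℝ) (hp : 1 ≤ p)
    (A' A'' : Fin m → Matrix (Fin d) (Fin d) ℂ) :
    (∀ μ γ : Fin m → ℂ, IsJointEigC A' μ → IsJointEigC A'' γ →
      Real.sqrt (((∑ k, ‖μ k‖ ^ p) ^ (1 / p) + (∑ k, ‖γ k‖ ^ p) ^ (1 / p)) / 2) ≤
        Real.sqrt ((opNormP p A' + opNormP p A'') / 2)) ∧
    sSup {r : ℝ | ∃ μ γ : Fin m → ℂ, IsJointEigC A' μ ∧ IsJointEigC A'' γ ∧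
        r = Real.sqrt (((∑ k, ‖μ k‖ ^ p) ^ (1 / p) + (∑ k, ‖γ k‖ ^ p) ^ (1 / p)) / 2)} ≤
      Real.sqrt ((opNormP p A' + opNormP p A'') / 2) := by
  have hp₀ : 0 ≤ p := by linarith
  have pointwise : ∀ μ γ : Fin m → ℂ, IsJointEigC A' μ → IsJointEigC A'' γ →
      Real.sqrt (((∑ k, ‖μ k‖ ^ p) ^ (1 / p) + (∑ k, ‖γ k‖ ^ p) ^ (1 / p)) / 2) ≤
        Real.sqrt ((opNormP p A' + opNormP p A'') / 2) := fun μ γ hμ hγ => by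
    gcongr
    exacts [hμ.lpNorm_le_opNormP hp₀, hγ.lpNorm_le_opNormP hp₀]
  refine ⟨pointwise, Real.sSup_le ?_ (Real.sqrt_nonneg _)⟩
  rintro r ⟨μ, γ, hμ, hγ, rfl⟩
  exact pointwise μ γ hμ hγ

/-- let `1 ≤ p < ∞` and let `T = (A 1, …, A m)` be a tuple of `d × d` bicomplex
matrices with commuting complex component tuples `T₁ = (A' 1, …, A' m)` and
`T₂ = (A'' 1, …, A'' m)`.  Then `r_p(T) ≤ ‖T‖_p`; that is, every element `λ` of the
restricted spectrum — every tuple `λ k = (μ k, γ k)` with `μ ∈ σ_p(T₁)`, `γ ∈ σ_p(T₂)` —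
satisfies `‖λ‖_p = √((‖μ‖_p + ‖γ‖_p)/2) ≤ ‖T‖_p = √((‖T₁‖_p + ‖T₂‖_p)/2)`, and hence the
supremum `r_p(T)` of these `‖λ‖_p` is at most `‖T‖_p`. -/
theorem bicomplex_spectral_radius_le_opNorm {d m : ℕ} (p : ℝ) (hp : 1 ≤ p)
    (A' A'' : Fin m → Matrix (Fin d) (Fin d) ℂ)
    (h' : ∀ i j, A' i * A' j = A' j * A' i)
    (h'' : ∀ i j, A'' i * A'' j = A'' j * A'' i) :
    (∀ μ γ : Fin m → ℂ, IsJointEigC A' μ → IsJointEigC A'' γ →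
      Real.sqrt (((∑ k, ‖μ k‖ ^ p) ^ (1 / p) + (∑ k, ‖γ k‖ ^ p) ^ (1 / p)) / 2) ≤
        Real.sqrt ((opNormP p A' + opNormP p A'') / 2)) ∧
    sSup {r : ℝ | ∃ μ γ : Fin m → ℂ, IsJointEigC A' μ ∧ IsJointEigC A'' γ ∧
        r = Real.sqrt (((∑ k, ‖μ k‖ ^ p) ^ (1 / p) + (∑ k, ‖γ k‖ ^ p) ^ (1 / p)) / 2)} ≤
      Real.sqrt ((opNormP p A' + opNormP p A'') / 2) :=
  bicomplex_spectral_radius_le_opNorm_general p hp A' A''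
end

section
/- Let H₁, H₂ be complex Hilbert spaces, H = H₁ × H₂ with norm ‖(x', x'')‖ = ((‖x'‖² + ‖x''‖²)/2)^{1/2}, and let T₁ = (T₁', T₁''), T₂ = (T₂', T₂'') be bicomplex bounded operators on H acting componentwise. Let λ₁ = (λ₁', λ₁''), λ₂ = (λ₂', λ₂'') be bicomplex scalars, and suppose (λ₁, λ₂) lies in the joint approximate point spectrum of (T₁, T₂), i.e. there is a sequence x_n ∈ H with ‖x_n‖ = 1 and ‖(T₁ − λ₁)x_n‖ → 0 and ‖(T₂ − λ₂)x_n‖ → 0. Then (λ₁', λ₂') lies in the joint approximate point spectrum of the complex pair (T₁', T₂') on H₁, or (λ₁'', λ₂'') lies in the joint approximate point spectrum of the complex pair (T₁'', T₂'') on H₂. In other words, σ_{ap}(T₁, T₂) ⊆ σ_{ap}(T₁', T₂')e₁ + (ℂ × ℂ)e₂ ∪ (ℂ × ℂ)e₁ + σ_{ap}(T₁'', T₂'')e₂. -/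
/-!
Since `‖x'‖² + ‖x''‖² = 2` for a unit vector `(x', x'')`, one of the two components has norm
at least `1` infinitely often. Along such a subsequence, normalising that component divides the
residuals `‖(Tᵢ − λᵢ) x‖` by a factor at least `1`, and each component residual is dominated by
`√2` times the bicomplex one, so the normalised component is a joint approximate eigenvector.
-/

open Filter Topology

/-- `(μ₁, μ₂)` lies in the joint approximate point spectrum of a pair `(S₁, S₂)` of bounded
operators on a complex Hilbert space `K`: there are unit vectors `y n` with
`‖(S₁ − μ₁) y n‖ → 0` and `‖(S₂ − μ₂) y n‖ → 0`. -/
def IsJointApproxEig {K : Type*} [NormedAddCommGroup K] [InnerProductSpace ℂ K]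
    (S₁ S₂ : K →L[ℂ] K) (μ₁ μ₂ : ℂ) : Prop :=
  ∃ y : ℕ → K, (∀ n, ‖y n‖ = 1) ∧
    Tendsto (fun n => ‖S₁ (y n) - μ₁ • y n‖) atTop (nhds 0) ∧
    Tendsto (fun n => ‖S₂ (y n) - μ₂ • y n‖) atTop (nhds 0)

lemma abs_le_sqrt_two_mul_sqrt_half_sq_add (a b : ℝ) :
    |a| ≤ √2 * √((a ^ 2 + b ^ 2) / 2) := by
  rw [← Real.sqrt_mul zero_le_two, mul_div_cancel₀ _ two_ne_zero]
  exact Real.abs_le_sqrt (le_add_of_nonneg_right (sq_nonneg b))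

lemma tendsto_zero_of_tendsto_sqrt_half_sq_add {α : Type*} {l : Filter α} {a b : α → ℝ}
    (h : Tendsto (fun n => √((a n ^ 2 + b n ^ 2) / 2)) l (𝓝 0)) :
    Tendsto a l (𝓝 0) ∧ Tendsto b l (𝓝 0) := by
  have hlim : Tendsto (fun n => √2 * √((a n ^ 2 + b n ^ 2) / 2)) l (𝓝 0) := by
    simpa using h.const_mul √2
  refine ⟨squeeze_zero_norm (fun n => abs_le_sqrt_two_mul_sqrt_half_sq_add (a n) (b n)) hlim,
    squeeze_zero_norm (fun n => ?_) hlim⟩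
  simpa only [add_comm, Real.norm_eq_abs] using abs_le_sqrt_two_mul_sqrt_half_sq_add (b n) (a n)

lemma norm_apply_inv_norm_smul_sub_le {𝕜 E : Type*} [RCLike 𝕜] [NormedAddCommGroup E]
    [NormedSpace 𝕜 E] (S : E →L[𝕜] E) (μ : 𝕜) {y : E} (hy : 1 ≤ ‖y‖) :
    ‖S ((‖y‖⁻¹ : 𝕜) • y) - μ • (‖y‖⁻¹ : 𝕜) • y‖ ≤ ‖S y - μ • y‖ := by
  rw [map_smul, smul_comm μ, ← smul_sub, norm_smul, norm_inv, RCLike.norm_ofReal,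
    abs_of_nonneg (norm_nonneg y)]
  exact mul_le_of_le_one_left (norm_nonneg _) (inv_le_one_of_one_le₀ hy)

lemma isJointApproxEig_of_frequently_one_le_norm {K : Type*} [NormedAddCommGroup K]
    [InnerProductSpace ℂ K] {S₁ S₂ : K →L[ℂ] K} {μ₁ μ₂ : ℂ} {y : ℕ → K}
    (hy : ∃ᶠ n in atTop, 1 ≤ ‖y n‖)
    (h₁ : Tendsto (fun n => ‖S₁ (y n) - μ₁ • y n‖) atTop (𝓝 0))
    (h₂ : Tendsto (fun n => ‖S₂ (y n) - μ₂ • y n‖) atTop (𝓝 0)) :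
    IsJointApproxEig S₁ S₂ μ₁ μ₂ := by
  obtain ⟨φ, hφ, hφy⟩ := extraction_of_frequently_atTop hy
  have hnormalise : ∀ (S : K →L[ℂ] K) (μ : ℂ),
      Tendsto (fun n => ‖S (y n) - μ • y n‖) atTop (𝓝 0) →
      Tendsto (fun n => ‖S ((‖y (φ n)‖⁻¹ : ℂ) • y (φ n)) - μ • (‖y (φ n)‖⁻¹ : ℂ) • y (φ n)‖)
        atTop (𝓝 0) := fun S μ h =>
    squeeze_zero (fun _ => norm_nonneg _)
      (fun n => norm_apply_inv_norm_smul_sub_le S μ (hφy n)) (h.comp hφ.tendsto_atTop)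
  refine ⟨fun n => (‖y (φ n)‖⁻¹ : ℂ) • y (φ n), fun n => ?_, hnormalise S₁ μ₁ h₁,
    hnormalise S₂ μ₂ h₂⟩
  exact norm_smul_inv_norm (norm_pos_iff.mp (one_pos.trans_le (hφy n)))

theorem bicomplex_approx_point_spectrum_subset_general
    {H₁ H₂ : Type*}
    [NormedAddCommGroup H₁] [InnerProductSpace ℂ H₁]
    [NormedAddCommGroup H₂] [InnerProductSpace ℂ H₂]
    (T₁' T₂' : H₁ →L[ℂ] H₁) (T₁'' T₂'' : H₂ →L[ℂ] H₂)
    (lam₁' lam₁'' lam₂' lam₂'' : ℂ)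
    (h : ∃ x : ℕ → H₁ × H₂,
      (∀ n, Real.sqrt ((‖(x n).1‖ ^ 2 + ‖(x n).2‖ ^ 2) / 2) = 1) ∧
      Tendsto (fun n => Real.sqrt
        ((‖T₁' (x n).1 - lam₁' • (x n).1‖ ^ 2 + ‖T₁'' (x n).2 - lam₁'' • (x n).2‖ ^ 2) / 2))
        atTop (nhds 0) ∧
      Tendsto (fun n => Real.sqrt
        ((‖T₂' (x n).1 - lam₂' • (x n).1‖ ^ 2 + ‖T₂'' (x n).2 - lam₂'' • (x n).2‖ ^ 2) / 2))
        atTop (nhds 0)) :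
    IsJointApproxEig T₁' T₂' lam₁' lam₂' ∨ IsJointApproxEig T₁'' T₂'' lam₁'' lam₂'' := by
  obtain ⟨x, hunit, h₁, h₂⟩ := h
  obtain ⟨h₁', h₁''⟩ := tendsto_zero_of_tendsto_sqrt_half_sq_add h₁
  obtain ⟨h₂', h₂''⟩ := tendsto_zero_of_tendsto_sqrt_half_sq_add h₂
  have hbig : ∀ n, 1 ≤ ‖(x n).1‖ ∨ 1 ≤ ‖(x n).2‖ := fun n => by
    have hsq := Real.sqrt_eq_one.mp (hunit n)
    by_contra! hsmall
    nlinarith [norm_nonneg (x n).1, norm_nonneg (x n).2]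
  rcases frequently_or_distrib.mp (Frequently.of_forall (f := atTop) hbig) with hfreq | hfreq
  · exact .inl (isJointApproxEig_of_frequently_one_le_norm hfreq h₁' h₂')
  · exact .inr (isJointApproxEig_of_frequently_one_le_norm hfreq h₁'' h₂'')

/-- model the bicomplex Hilbert module as `H = H₁ × H₂` with the norm
`‖(x', x'')‖ = √((‖x'‖² + ‖x''‖²)/2)`, bicomplex operators `T₁ = (T₁', T₁'')`,
`T₂ = (T₂', T₂'')` and bicomplex scalars `λ₁ = (λ₁', λ₁'')`, `λ₂ = (λ₂', λ₂'')` acting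
componentwise.  If `(λ₁, λ₂)` lies in the joint approximate point spectrum of `(T₁, T₂)` —
i.e. there is a sequence `x n ∈ H` of unit vectors with `‖(T₁ − λ₁) x n‖ → 0` and
`‖(T₂ − λ₂) x n‖ → 0` — then `(λ₁', λ₂')` lies in the joint approximate point spectrum of
`(T₁', T₂')` on `H₁`, or `(λ₁'', λ₂'')` lies in that of `(T₁'', T₂'')` on `H₂`. -/
theorem bicomplex_approx_point_spectrum_subset
    {H₁ H₂ : Type*}
    [NormedAddCommGroup H₁] [InnerProductSpace ℂ H₁] [CompleteSpace H₁]
    [NormedAddCommGroup H₂] [InnerProductSpace ℂ H₂] [CompleteSpace H₂]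
    (T₁' T₂' : H₁ →L[ℂ] H₁) (T₁'' T₂'' : H₂ →L[ℂ] H₂)
    (lam₁' lam₁'' lam₂' lam₂'' : ℂ)
    (h : ∃ x : ℕ → H₁ × H₂,
      (∀ n, Real.sqrt ((‖(x n).1‖ ^ 2 + ‖(x n).2‖ ^ 2) / 2) = 1) ∧
      Tendsto (fun n => Real.sqrt
        ((‖T₁' (x n).1 - lam₁' • (x n).1‖ ^ 2 + ‖T₁'' (x n).2 - lam₁'' • (x n).2‖ ^ 2) / 2))
        atTop (nhds 0) ∧
      Tendsto (fun n => Real.sqrt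
        ((‖T₂' (x n).1 - lam₂' • (x n).1‖ ^ 2 + ‖T₂'' (x n).2 - lam₂'' • (x n).2‖ ^ 2) / 2))
        atTop (nhds 0)) :
    IsJointApproxEig T₁' T₂' lam₁' lam₂' ∨ IsJointApproxEig T₁'' T₂'' lam₁'' lam₂'' :=
  bicomplex_approx_point_spectrum_subset_general T₁' T₂' T₁'' T₂'' lam₁' lam₁'' lam₂' lam₂'' h
end

section
/- Let H₁, H₂ be complex Hilbert spaces, H = H₁ × H₂, and let T₁ = (T₁', T₁''), T₂ = (T₂', T₂'') be bicomplex bounded operators on H acting componentwise, with T₁T₂ = T₂T₁. Define the joint residual set σ_r(T₁, T₂) as the set of pairs of bicomplex scalars (λ₁, λ₂), λ_i = (λ_i', λ_i''), for which the subspace range(T₁ − λ₁) + range(T₂ − λ₂) is not dense in H. Then σ_r(T₁, T₂) = conj(σ_p((T₁')*, (T₂')*))e₁ + (ℂ × ℂ)e₂ ∪ (ℂ × ℂ)e₁ + conj(σ_p((T₁'')*, (T₂'')*))e₂; that is, (λ₁, λ₂) ∈ σ_r(T₁, T₂) if and only if (conj λ₁', conj λ₂') is a joint eigenvalue of ((T₁')*,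 (T₂')*) on H₁ or (conj λ₁'', conj λ₂'') is a joint eigenvalue of ((T₁'')*, (T₂'')*) on H₂. -/
/-!
Both ranges are products of ranges, so their sum is the product of the sums
`range(T₁' − λ₁') + range(T₂' − λ₂')` and `range(T₁'' − λ₁'') + range(T₂'' − λ₂'')`, and a product
of subspaces is dense iff both factors are. In a Hilbert space a subspace is dense iff its
orthogonal complement vanishes, and `(range A + range B)ᗮ = ker A* ∩ ker B*`; for
`A = T − λ` the kernel of `A* = T* − conj λ` is the `conj λ`-eigenspace of `T*`.
-/

open ContinuousLinearMap ComplexConjugate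

theorem Submodule.dense_prod_iff {R M N : Type*} [Semiring R]
    [AddCommMonoid M] [Module R M] [TopologicalSpace M]
    [AddCommMonoid N] [Module R N] [TopologicalSpace N]
    (p : Submodule R M) (q : Submodule R N) :
    Dense (p.prod q : Set (M × N)) ↔ Dense (p : Set M) ∧ Dense (q : Set N) := by
  simp only [dense_iff_closure_eq, Submodule.prod_coe, closure_prod_eq, Set.prod_eq_univ]

section Hilbert

variable {𝕜 E F G : Type*} [RCLike 𝕜]
  [NormedAddCommGroup E] [InnerProductSpace 𝕜 E] [CompleteSpace E]
  [NormedAddCommGroup F] [InnerProductSpace 𝕜 F] [CompleteSpace F]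
  [NormedAddCommGroup G] [InnerProductSpace 𝕜 G] [CompleteSpace G]

theorem ContinuousLinearMap.not_dense_range_sup_range_iff (A : E →L[𝕜] F) (B : G →L[𝕜] F) :
    ¬ Dense ((LinearMap.range (A : E →ₗ[𝕜] F) ⊔ LinearMap.range (B : G →ₗ[𝕜] F) :
        Submodule 𝕜 F) : Set F) ↔
      ∃ y : F, y ≠ 0 ∧ adjoint A y = 0 ∧ adjoint B y = 0 := by
  rw [Submodule.dense_iff_topologicalClosure_eq_top, Submodule.topologicalClosure_eq_top_iff,
    ← Submodule.inf_orthogonal, orthogonal_range, orthogonal_range, ← ne_eq,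
    Submodule.ne_bot_iff]
  simp only [Submodule.mem_inf, LinearMap.mem_ker, coe_coe]
  exact exists_congr fun _ ↦ and_comm

theorem ContinuousLinearMap.adjoint_sub_smul_id (T : E →L[𝕜] E) (c : 𝕜) :
    adjoint (T - c • ContinuousLinearMap.id 𝕜 E) =
      adjoint T - conj c • ContinuousLinearMap.id 𝕜 E := by
  rw [map_sub, map_smulₛₗ, adjoint_id]

theorem ContinuousLinearMap.adjoint_sub_smul_id_apply_eq_zero_iff (T : E →L[𝕜] E) (c : 𝕜)
    (y : E) :
    adjoint (T - c • ContinuousLinearMap.id 𝕜 E) y = 0 ↔ adjoint T y = conj c • y := by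
  rw [adjoint_sub_smul_id, sub_apply, smul_apply, id_apply, sub_eq_zero]

end Hilbert

theorem bicomplex_residual_spectrum_iff_general
    {H₁ H₂ : Type*}
    [NormedAddCommGroup H₁] [InnerProductSpace ℂ H₁] [CompleteSpace H₁]
    [NormedAddCommGroup H₂] [InnerProductSpace ℂ H₂] [CompleteSpace H₂]
    (T₁' T₂' : H₁ →L[ℂ] H₁) (T₁'' T₂'' : H₂ →L[ℂ] H₂)
    (lam₁' lam₁'' lam₂' lam₂'' : ℂ) :
    (¬ Dense ((↑(LinearMap.range
          (((T₁' - lam₁' • ContinuousLinearMap.id ℂ H₁).prodMap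
            (T₁'' - lam₁'' • ContinuousLinearMap.id ℂ H₂) :
            (H₁ × H₂) →L[ℂ] (H₁ × H₂)) :
            (H₁ × H₂) →ₗ[ℂ] (H₁ × H₂)) ⊔
        LinearMap.range
          (((T₂' - lam₂' • ContinuousLinearMap.id ℂ H₁).prodMap
            (T₂'' - lam₂'' • ContinuousLinearMap.id ℂ H₂) :
            (H₁ × H₂) →L[ℂ] (H₁ × H₂)) :
            (H₁ × H₂) →ₗ[ℂ] (H₁ × H₂))) : Set (H₁ × H₂)))) ↔
      ((∃ y : H₁, y ≠ 0 ∧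
          adjoint T₁' y = conj lam₁' • y ∧ adjoint T₂' y = conj lam₂' • y) ∨
        (∃ z : H₂, z ≠ 0 ∧
          adjoint T₁'' z = conj lam₁'' • z ∧ adjoint T₂'' z = conj lam₂'' • z)) := by
  rw [coe_prodMap, coe_prodMap, LinearMap.range_prodMap, LinearMap.range_prodMap,
    Submodule.prod_sup_prod, Submodule.dense_prod_iff, not_and_or,
    not_dense_range_sup_range_iff, not_dense_range_sup_range_iff]
  simp only [adjoint_sub_smul_id_apply_eq_zero_iff]

/-- model the bicomplex Hilbert module as `H = H₁ × H₂` with bicomplex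
operators `T₁ = (T₁', T₁'')`, `T₂ = (T₂', T₂'')` acting componentwise and commuting, and
bicomplex scalars `λ₁ = (λ₁', λ₁'')`, `λ₂ = (λ₂', λ₂'')` acting componentwise.  Then
`(λ₁, λ₂)` lies in the joint residual set `σ_r(T₁, T₂)` — i.e. the subspace
`range(T₁ − λ₁) + range(T₂ − λ₂)` is not dense in `H` — iff `(conj λ₁', conj λ₂')` is a
joint eigenvalue of `((T₁')*, (T₂')*)` on `H₁` or `(conj λ₁'', conj λ₂'')` is a joint
eigenvalue of `((T₁'')*, (T₂'')*)` on `H₂`. -/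
theorem bicomplex_residual_spectrum_iff
    {H₁ H₂ : Type*}
    [NormedAddCommGroup H₁] [InnerProductSpace ℂ H₁] [CompleteSpace H₁]
    [NormedAddCommGroup H₂] [InnerProductSpace ℂ H₂] [CompleteSpace H₂]
    (T₁' T₂' : H₁ →L[ℂ] H₁) (T₁'' T₂'' : H₂ →L[ℂ] H₂)
    (hcomm : (T₁'.prodMap T₁'').comp (T₂'.prodMap T₂'') =
      (T₂'.prodMap T₂'').comp (T₁'.prodMap T₁''))
    (lam₁' lam₁'' lam₂' lam₂'' : ℂ) :
    (¬ Dense ((↑(LinearMap.range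
          (((T₁' - lam₁' • ContinuousLinearMap.id ℂ H₁).prodMap
            (T₁'' - lam₁'' • ContinuousLinearMap.id ℂ H₂) :
            (H₁ × H₂) →L[ℂ] (H₁ × H₂)) :
            (H₁ × H₂) →ₗ[ℂ] (H₁ × H₂)) ⊔
        LinearMap.range
          (((T₂' - lam₂' • ContinuousLinearMap.id ℂ H₁).prodMap
            (T₂'' - lam₂'' • ContinuousLinearMap.id ℂ H₂) :
            (H₁ × H₂) →L[ℂ] (H₁ × H₂)) :
            (H₁ × H₂) →ₗ[ℂ] (H₁ × H₂))) : Set (H₁ × H₂)))) ↔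
      ((∃ y : H₁, y ≠ 0 ∧
          adjoint T₁' y = conj lam₁' • y ∧ adjoint T₂' y = conj lam₂' • y) ∨
        (∃ z : H₂, z ≠ 0 ∧
          adjoint T₁'' z = conj lam₁'' • z ∧ adjoint T₂'' z = conj lam₂'' • z)) :=
  bicomplex_residual_spectrum_iff_general T₁' T₂' T₁'' T₂'' lam₁' lam₁'' lam₂' lam₂''
end
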